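/- arXiv:1912.10155 — 5 statements merged into one kernel-verified Lean document; each statement's English description precedes it below -/
import Mathlib

section
/- Under the distributed two-time-scale setup with δ ∈ (σ,1), σ + 2α0 ≤ 1, K* a positive integer with K* ≥ (2α0/(δ−σ))^{3/2}, σ^k ≤ 1/(k+1) for all k ≥ 0, and D = 2√N(R+C)(6α0+1)(K*)^{1/3}/(1−δ): for every k ≥ 0, ∑_{i=1}^N ( ‖y_k^i − ȳ_k‖² + (β_k/α_k)·‖x_k^i − x̄_k‖² ) ≤ 8 D² β0 α0 (1 + ln K*)² σ^{−2K*} / ((1−σ)²(k+1)^{2/3}) + 8 D² β0 α0 / ((1−σ)²(k+2)^{5/3}). -/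
/-- The Euclidean norm of a vector (represented as a function into `ℝ`). -/
noncomputable def vecEnorm {n : ℕ} (v : Fin n → ℝ) : ℝ :=
  Real.sqrt (∑ i, v i ^ 2)

/-- The Frobenius norm of an `N×d` real matrix. -/
noncomputable def fnorm {N d : ℕ} (M : Matrix (Fin N) (Fin d) ℝ) : ℝ :=
  Real.sqrt (∑ i, ∑ j, M i j ^ 2)

section StmtAux

lemma vecEnorm_nonneg {n : ℕ} (v : Fin n → ℝ) : 0 ≤ vecEnorm v := Real.sqrt_nonneg _
lemma vecEnorm_sq {n : ℕ} (v : Fin n → ℝ) : vecEnorm v ^ 2 = ∑ i, v i ^ 2 :=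
  Real.sq_sqrt (Finset.sum_nonneg fun _ _ => sq_nonneg _)
lemma fnorm_nonneg {N d : ℕ} (M : Matrix (Fin N) (Fin d) ℝ) : 0 ≤ fnorm M := Real.sqrt_nonneg _
lemma fnorm_sq {N d : ℕ} (M : Matrix (Fin N) (Fin d) ℝ) : fnorm M ^ 2 = ∑ i, ∑ j, M i j ^ 2 :=
  Real.sq_sqrt (Finset.sum_nonneg fun _ _ => Finset.sum_nonneg fun _ _ => sq_nonneg _)
lemma fnorm_le {N d : ℕ} {M : Matrix (Fin N) (Fin d) ℝ} {a : ℝ} (ha : 0 ≤ a)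
    (h : ∑ i, ∑ j, M i j ^ 2 ≤ a ^ 2) : fnorm M ≤ a := by
  have h2 : Real.sqrt (∑ i, ∑ j, M i j ^ 2) ≤ Real.sqrt (a ^ 2) := Real.sqrt_le_sqrt h
  rwa [Real.sqrt_sq ha] at h2

-- scaling
lemma fnorm_const_mul {N d : ℕ} (a : ℝ) (f : Fin N → Fin d → ℝ) :
    fnorm (fun i j => a * f i j) = |a| * fnorm f := by
  show Real.sqrt _ = _
  have : (∑ i, ∑ j, (a * f i j) ^ 2) = a ^ 2 * ∑ i, ∑ j, f i j ^ 2 := by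
    simp [Finset.mul_sum, mul_pow]
  rw [this, Real.sqrt_mul (sq_nonneg a), Real.sqrt_sq_eq_abs]
  rfl

-- rows through an operator with vecEnorm bound
lemma fnorm_rows_le {N d : ℕ} (A : Matrix (Fin d) (Fin d) ℝ)
    (hA : ∀ v, vecEnorm (A.mulVec v) ≤ vecEnorm v) (f : Fin N → Fin d → ℝ) :
    fnorm (fun i j => A.mulVec (f i) j) ≤ fnorm f := by
  apply fnorm_le (fnorm_nonneg f)
  rw [show fnorm f ^ 2 = ∑ i, ∑ j, f i j ^ 2 from fnorm_sq f]
  refine Finset.sum_le_sum fun i _ => ?_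
  have h := hA (f i)
  have h2 := pow_le_pow_left₀ (vecEnorm_nonneg _) h 2
  rw [vecEnorm_sq, vecEnorm_sq] at h2
  exact h2

-- columns through a contraction
lemma fnorm_cols_le {N d : ℕ} (W : Matrix (Fin N) (Fin N) ℝ) (σ : ℝ) (hσ : 0 ≤ σ)
    (hW : ∀ v : Fin N → ℝ, (∑ i, v i = 0) → vecEnorm (W.mulVec v) ≤ σ * vecEnorm v)
    (f : Fin N → Fin d → ℝ) (hf : ∀ j, ∑ i, f i j = 0) :
    fnorm (fun i j => ∑ l, W i l * f l j) ≤ σ * fnorm f := by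
  apply fnorm_le (mul_nonneg hσ (fnorm_nonneg f))
  rw [mul_pow, show fnorm f ^ 2 = ∑ i, ∑ j, f i j ^ 2 from fnorm_sq f]
  have key : ∀ j, ∑ i, (∑ l, W i l * f l j) ^ 2 ≤ σ ^ 2 * ∑ i, f i j ^ 2 := by
    intro j
    have h := hW (fun l => f l j) (hf j)
    have h2 := pow_le_pow_left₀ (vecEnorm_nonneg _) h 2
    rw [vecEnorm_sq, mul_pow, vecEnorm_sq] at h2
    calc ∑ i, (∑ l, W i l * f l j) ^ 2 = ∑ i, (W.mulVec (fun l => f l j) i) ^ 2 := by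
          simp [Matrix.mulVec, dotProduct]
      _ ≤ σ ^ 2 * ∑ i, f i j ^ 2 := h2
  calc ∑ i, ∑ j, (∑ l, W i l * f l j) ^ 2 = ∑ j, ∑ i, (∑ l, W i l * f l j) ^ 2 :=
        Finset.sum_comm
    _ ≤ ∑ j, σ ^ 2 * ∑ i, f i j ^ 2 := Finset.sum_le_sum fun j _ => key j
    _ = σ ^ 2 * ∑ j, ∑ i, f i j ^ 2 := (Finset.mul_sum _ _ _).symm
    _ = σ ^ 2 * ∑ i, ∑ j, f i j ^ 2 := by rw [Finset.sum_comm]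

-- per-column centering
lemma sum_center_sq_le {N : ℕ} (hN : 0 < N) (v : Fin N → ℝ) :
    ∑ i, (v i - 1 / (N : ℝ) * ∑ m, v m) ^ 2 ≤ ∑ i, v i ^ 2 := by
  have hNR : (0:ℝ) < N := by exact_mod_cast hN
  set S := ∑ m, v m with hS
  set c := 1 / (N : ℝ) * S with hc
  have expand : ∑ i, (v i - c) ^ 2 = (∑ i, v i ^ 2) - 2 * c * S + N * c ^ 2 := by
    have : ∀ i, (v i - c) ^ 2 = v i ^ 2 - 2 * c * v i + c ^ 2 := fun i => by ring
    rw [Finset.sum_congr rfl fun i _ => this i]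
    rw [Finset.sum_add_distrib, Finset.sum_sub_distrib, ← Finset.mul_sum, Finset.sum_const,
      Finset.card_fin, nsmul_eq_mul, ← hS]
  rw [expand]
  have hcS : (N : ℝ) * c ^ 2 = c * S := by
    rw [hc]; field_simp
  nlinarith [mul_self_nonneg S, sq_nonneg S, mul_pos hNR hNR, sq_nonneg (S / (N:ℝ)),
    mul_nonneg (le_of_lt hNR) (sq_nonneg c)]

-- centering a matrix
lemma fnorm_center_le {N d : ℕ} (hN : 0 < N) (f : Fin N → Fin d → ℝ) :
    fnorm (fun i j => f i j - 1 / (N : ℝ) * ∑ m, f m j) ≤ fnorm f := by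
  apply fnorm_le (fnorm_nonneg f)
  rw [show fnorm f ^ 2 = ∑ i, ∑ j, f i j ^ 2 from fnorm_sq f]
  calc ∑ i, ∑ j, (f i j - 1 / (N : ℝ) * ∑ m, f m j) ^ 2
      = ∑ j, ∑ i, (f i j - 1 / (N : ℝ) * ∑ m, f m j) ^ 2 := Finset.sum_comm
    _ ≤ ∑ j, ∑ i, f i j ^ 2 :=
        Finset.sum_le_sum fun j _ => sum_center_sq_le hN (fun i => f i j)
    _ = ∑ i, ∑ j, f i j ^ 2 := Finset.sum_comm

-- row norm bound
lemma fnorm_row_bound {N d : ℕ} {f : Fin N → Fin d → ℝ} {R : ℝ} (hR : 0 ≤ R)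
    (hf : ∀ i, vecEnorm (f i) ≤ R) : fnorm f ≤ Real.sqrt N * R := by
  apply fnorm_le (by positivity)
  have : ∀ i, ∑ j, f i j ^ 2 ≤ R ^ 2 := fun i => by
    have h2 := pow_le_pow_left₀ (vecEnorm_nonneg _) (hf i) 2
    rwa [vecEnorm_sq] at h2
  calc ∑ i, ∑ j, f i j ^ 2 ≤ ∑ _i : Fin N, R ^ 2 := Finset.sum_le_sum fun i _ => this i
    _ = N * R ^ 2 := by simp [Finset.sum_const, nsmul_eq_mul]
    _ = (Real.sqrt N * R) ^ 2 := by
        rw [mul_pow, Real.sq_sqrt (by positivity : (0:ℝ) ≤ (N:ℝ))]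

lemma fnorm_eq_norm {N d : ℕ} (f : Fin N → Fin d → ℝ) :
    fnorm f = ‖(WithLp.equiv 2 (Fin N × Fin d → ℝ)).symm (fun p => f p.1 p.2)‖ := by
  rw [EuclideanSpace.norm_eq]
  show Real.sqrt _ = _
  congr 1
  rw [Fintype.sum_prod_type]
  simp [Real.norm_eq_abs, sq_abs]

lemma fnorm_add_le {N d : ℕ} (f g : Fin N → Fin d → ℝ) :
    fnorm (fun i j => f i j + g i j) ≤ fnorm f + fnorm g := by
  rw [fnorm_eq_norm f, fnorm_eq_norm g, fnorm_eq_norm (fun i j => f i j + g i j)]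
  have h := norm_add_le ((WithLp.equiv 2 (Fin N × Fin d → ℝ)).symm (fun p => f p.1 p.2))
    ((WithLp.equiv 2 (Fin N × Fin d → ℝ)).symm (fun p => g p.1 p.2))
  exact h

lemma fnorm_neg {N d : ℕ} (f : Fin N → Fin d → ℝ) :
    fnorm (fun i j => -(f i j)) = fnorm f := by
  show Real.sqrt _ = Real.sqrt _
  simp

lemma step_bound {N d : ℕ} (hN : 0 < N)
    (W : Matrix (Fin N) (Fin N) ℝ)
    (hWrow : ∀ i, ∑ j, W i j = 1) (hWcol : ∀ j, ∑ i, W i j = 1)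
    (σ : ℝ) (hσ : 0 ≤ σ)
    (hWc : ∀ v : Fin N → ℝ, (∑ i, v i = 0) → vecEnorm (W.mulVec v) ≤ σ * vecEnorm v)
    (A B : Matrix (Fin d) (Fin d) ℝ)
    (hA : ∀ v, vecEnorm (A.mulVec v) ≤ vecEnorm v) (hB : ∀ v, vecEnorm (B.mulVec v) ≤ vecEnorm v)
    (b : Fin N → Fin d → ℝ) (R : ℝ) (hR : 0 ≤ R) (hb : ∀ i, vecEnorm (b i) ≤ R)
    (ξ : Fin N → Fin d → ℝ) (C : ℝ) (hC : 0 ≤ C) (hξ : ∀ i, vecEnorm (ξ i) ≤ C)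
    (a : ℝ) (ha : 0 ≤ a)
    (u v unext : Fin N → Fin d → ℝ)
    (hrec : ∀ i, unext i =
      (∑ j, W i j • u j) - a • (A.mulVec (u i) + B.mulVec (v i) - b i + ξ i)) :
    fnorm (fun i j => unext i j - 1 / (N:ℝ) * ∑ m, unext m j) ≤
      σ * fnorm (fun i j => u i j - 1 / (N:ℝ) * ∑ m, u m j)
      + a * (fnorm (fun i j => u i j - 1 / (N:ℝ) * ∑ m, u m j)
             + fnorm (fun i j => v i j - 1 / (N:ℝ) * ∑ m, v m j)
             + Real.sqrt N * (R + C)) := by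
  have hNne : ((N:ℝ)) ≠ 0 := by positivity
  set G : Fin N → Fin d → ℝ :=
    fun i j => A.mulVec (u i) j + B.mulVec (v i) j - b i j + ξ i j with hGdef
  have happ : ∀ i j, unext i j = (∑ l, W i l * u l j) - a * G i j := by
    intro i j
    rw [hrec i]
    simp [hGdef, Finset.sum_apply, Pi.smul_apply, smul_eq_mul, Pi.sub_apply, Pi.add_apply]
    ring
  have hGavg : ∀ j, ∑ m, unext m j = (∑ m, u m j) - a * ∑ m, G m j := by
    intro j
    calc ∑ m, unext m j = ∑ m, ((∑ l, W m l * u l j) - a * G m j) :=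
          Finset.sum_congr rfl fun m _ => happ m j
      _ = (∑ m, ∑ l, W m l * u l j) - ∑ m, a * G m j := Finset.sum_sub_distrib _ _
      _ = (∑ l, u l j) - a * ∑ m, G m j := by
          rw [Finset.sum_comm, ← Finset.mul_sum]
          congr 1
          refine Finset.sum_congr rfl fun l _ => ?_
          rw [← Finset.sum_mul, hWcol l, one_mul]
  have hhat : ∀ i j, unext i j - 1/(N:ℝ) * ∑ m, unext m j =
      (∑ l, W i l * (u l j - 1/(N:ℝ) * ∑ m, u m j))
      + (-a) * (G i j - 1/(N:ℝ) * ∑ m, G m j) := by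
    intro i j
    have hw : ∑ l, W i l * (u l j - 1/(N:ℝ) * ∑ m, u m j)
        = (∑ l, W i l * u l j) - (∑ l, W i l) * (1/(N:ℝ) * ∑ m, u m j) := by
      rw [Finset.sum_mul, ← Finset.sum_sub_distrib]
      exact Finset.sum_congr rfl fun l _ => by ring
    rw [hw, hWrow i, one_mul, happ i j, hGavg j]
    ring
  have hmain : fnorm (fun i j => unext i j - 1 / (N:ℝ) * ∑ m, unext m j)
      = fnorm (fun i j => (∑ l, W i l * (u l j - 1/(N:ℝ) * ∑ m, u m j))
          + (-a) * (G i j - 1/(N:ℝ) * ∑ m, G m j)) := by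
    congr 1
    funext i j
    exact hhat i j
  -- column sums of centered u vanish
  have hzero : ∀ (f : Fin N → Fin d → ℝ) (j : Fin d),
      ∑ i, (f i j - 1/(N:ℝ) * ∑ m, f m j) = 0 := by
    intro f j
    rw [Finset.sum_sub_distrib, Finset.sum_const, Finset.card_fin, nsmul_eq_mul]
    field_simp
    ring
  -- decomposition of Ghat
  have eAgen : ∀ (A' : Matrix (Fin d) (Fin d) ℝ) (w : Fin N → Fin d → ℝ) (i : Fin N) (j : Fin d),
      A'.mulVec (fun t => w i t - 1/(N:ℝ) * ∑ m, w m t) j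
        = A'.mulVec (w i) j - 1/(N:ℝ) * ∑ m, A'.mulVec (w m) j := by
    intro A' w i j
    simp only [Matrix.mulVec, dotProduct]
    have h1 : (1/(N:ℝ)) * ∑ m, ∑ t, A' j t * w m t
        = ∑ t, A' j t * (1/(N:ℝ) * ∑ m, w m t) := by
      rw [Finset.sum_comm, Finset.mul_sum]
      refine Finset.sum_congr rfl fun t _ => ?_
      rw [← Finset.mul_sum]
      ring
    calc ∑ t, A' j t * (w i t - 1/(N:ℝ) * ∑ m, w m t)
        = (∑ t, A' j t * w i t) - ∑ t, A' j t * (1/(N:ℝ) * ∑ m, w m t) := by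
          rw [← Finset.sum_sub_distrib]
          exact Finset.sum_congr rfl fun t _ => by ring
      _ = (∑ t, A' j t * w i t) - 1/(N:ℝ) * ∑ m, ∑ t, A' j t * w m t := by rw [h1]
  have hsplit : ∀ j, ∑ m, G m j = (∑ m, A.mulVec (u m) j) + (∑ m, B.mulVec (v m) j)
      - (∑ m, b m j) + (∑ m, ξ m j) := by
    intro j
    simp [hGdef, Finset.sum_add_distrib, Finset.sum_sub_distrib]
  have hGhat_decomp : ∀ i j, G i j - 1/(N:ℝ) * ∑ m, G m j =
      ((A.mulVec (fun t => u i t - 1/(N:ℝ) * ∑ m, u m t) j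
        + B.mulVec (fun t => v i t - 1/(N:ℝ) * ∑ m, v m t) j)
       + ((-(b i j - 1/(N:ℝ) * ∑ m, b m j)) + (ξ i j - 1/(N:ℝ) * ∑ m, ξ m j))) := by
    intro i j
    rw [eAgen A u i j, eAgen B v i j, hsplit j]
    simp only [hGdef]
    ring
  -- bound on fnorm of Ghat
  have hGhat_le : fnorm (fun i j => G i j - 1/(N:ℝ) * ∑ m, G m j)
      ≤ fnorm (fun i j => u i j - 1/(N:ℝ) * ∑ m, u m j)
        + fnorm (fun i j => v i j - 1/(N:ℝ) * ∑ m, v m j) + Real.sqrt N * (R + C) := by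
    have hrw : fnorm (fun i j => G i j - 1/(N:ℝ) * ∑ m, G m j)
        = fnorm (fun i j =>
            ((A.mulVec (fun t => u i t - 1/(N:ℝ) * ∑ m, u m t) j
              + B.mulVec (fun t => v i t - 1/(N:ℝ) * ∑ m, v m t) j)
             + ((-(b i j - 1/(N:ℝ) * ∑ m, b m j)) + (ξ i j - 1/(N:ℝ) * ∑ m, ξ m j)))) := by
      congr 1
      funext i j
      exact hGhat_decomp i j
    rw [hrw]
    have t1 : fnorm (fun i j => A.mulVec (fun t => u i t - 1/(N:ℝ) * ∑ m, u m t) j)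
        ≤ fnorm (fun i j => u i j - 1/(N:ℝ) * ∑ m, u m j) :=
      fnorm_rows_le A hA _
    have t2 : fnorm (fun i j => B.mulVec (fun t => v i t - 1/(N:ℝ) * ∑ m, v m t) j)
        ≤ fnorm (fun i j => v i j - 1/(N:ℝ) * ∑ m, v m j) :=
      fnorm_rows_le B hB _
    have t3 : fnorm (fun i j => -(b i j - 1/(N:ℝ) * ∑ m, b m j)) ≤ Real.sqrt N * R := by
      rw [fnorm_neg]
      exact le_trans (fnorm_center_le hN b) (fnorm_row_bound hR hb)
    have t4 : fnorm (fun i j => ξ i j - 1/(N:ℝ) * ∑ m, ξ m j) ≤ Real.sqrt N * C :=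
      le_trans (fnorm_center_le hN ξ) (fnorm_row_bound hC hξ)
    have tri1 := fnorm_add_le
      (fun i j => A.mulVec (fun t => u i t - 1/(N:ℝ) * ∑ m, u m t) j
        + B.mulVec (fun t => v i t - 1/(N:ℝ) * ∑ m, v m t) j)
      (fun i j => (-(b i j - 1/(N:ℝ) * ∑ m, b m j)) + (ξ i j - 1/(N:ℝ) * ∑ m, ξ m j))
    have tri2 := fnorm_add_le
      (fun i j => A.mulVec (fun t => u i t - 1/(N:ℝ) * ∑ m, u m t) j)
      (fun i j => B.mulVec (fun t => v i t - 1/(N:ℝ) * ∑ m, v m t) j)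
    have tri3 := fnorm_add_le
      (fun i j => -(b i j - 1/(N:ℝ) * ∑ m, b m j))
      (fun i j => ξ i j - 1/(N:ℝ) * ∑ m, ξ m j)
    have := le_trans tri1 (add_le_add (le_trans tri2 (add_le_add t1 t2))
      (le_trans tri3 (add_le_add t3 t4)))
    rw [mul_add]
    linarith [this]
  -- assemble
  rw [hmain]
  calc fnorm (fun i j => (∑ l, W i l * (u l j - 1/(N:ℝ) * ∑ m, u m j))
          + (-a) * (G i j - 1/(N:ℝ) * ∑ m, G m j))
      ≤ fnorm (fun i j => ∑ l, W i l * (u l j - 1/(N:ℝ) * ∑ m, u m j))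
        + fnorm (fun i j => (-a) * (G i j - 1/(N:ℝ) * ∑ m, G m j)) :=
        fnorm_add_le _ _
    _ ≤ σ * fnorm (fun i j => u i j - 1/(N:ℝ) * ∑ m, u m j)
        + a * (fnorm (fun i j => u i j - 1/(N:ℝ) * ∑ m, u m j)
               + fnorm (fun i j => v i j - 1/(N:ℝ) * ∑ m, v m j)
               + Real.sqrt N * (R + C)) := by
        refine add_le_add ?_ ?_
        · exact fnorm_cols_le W σ hσ hWc _ (fun j => hzero u j)
        · rw [fnorm_const_mul, abs_neg, abs_of_nonneg ha]
          exact mul_le_mul_of_nonneg_left hGhat_le ha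
lemma cube_rt_sq {u : ℝ} (hu : 0 ≤ u) :
    (u ^ ((1:ℝ)/3)) ^ (3:ℕ) = u := by
  rw [← Real.rpow_natCast (u ^ ((1:ℝ)/3)) 3, ← Real.rpow_mul hu]
  norm_num

lemma rpow23_eq_sq {u : ℝ} (hu : 0 ≤ u) :
    u ^ ((2:ℝ)/3) = (u ^ ((1:ℝ)/3)) ^ (2:ℕ) := by
  rw [← Real.rpow_natCast (u ^ ((1:ℝ)/3)) 2, ← Real.rpow_mul hu]
  norm_num

lemma one_le_rpow13 {u : ℝ} (hu : 1 ≤ u) : 1 ≤ u ^ ((1:ℝ)/3) := by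
  have := Real.rpow_le_rpow (by norm_num : (0:ℝ) ≤ 1) hu (by norm_num : (0:ℝ) ≤ 1/3)
  rwa [Real.one_rpow] at this

lemma rpow13_mono {u v : ℝ} (hu : 0 ≤ u) (huv : u ≤ v) :
    u ^ ((1:ℝ)/3) ≤ v ^ ((1:ℝ)/3) := Real.rpow_le_rpow hu huv (by norm_num)

lemma sum_inv23_le (K : ℕ) :
    ∑ t ∈ Finset.range K, 1 / (((t:ℝ)+1) ^ ((2:ℝ)/3)) ≤ 3 * (K:ℝ) ^ ((1:ℝ)/3) := by
  induction K with
  | zero => simp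
  | succ K ih =>
    rw [Finset.sum_range_succ]
    have hK0 : (0:ℝ) ≤ (K:ℝ) := by positivity
    have hK1 : (0:ℝ) ≤ (K:ℝ) + 1 := by linarith
    set a := ((K:ℝ)+1) ^ ((1:ℝ)/3) with ha
    set b := (K:ℝ) ^ ((1:ℝ)/3) with hb
    have ha3 : a ^ (3:ℕ) = (K:ℝ)+1 := cube_rt_sq hK1
    have hb3 : b ^ (3:ℕ) = (K:ℝ) := cube_rt_sq hK0
    have hb0 : 0 ≤ b := Real.rpow_nonneg hK0 _
    have ha1 : 1 ≤ a := by
      rw [ha]; exact one_le_rpow13 (by linarith)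
    have hba : b ≤ a := by
      rw [ha, hb]; exact rpow13_mono hK0 (by linarith)
    have key : 1 / (((K:ℝ)+1) ^ ((2:ℝ)/3)) ≤ 3 * (a - b) := by
      rw [rpow23_eq_sq hK1, ← ha, div_le_iff₀ (by positivity)]
      nlinarith [mul_nonneg (mul_nonneg (sub_nonneg.2 hba) (sub_nonneg.2 hba))
        (by linarith : (0:ℝ) ≤ 2*a + b), ha3, hb3]
    have hcast : ((K+1 : ℕ):ℝ) = (K:ℝ) + 1 := by push_cast; ring
    rw [hcast]
    rw [← ha]
    linarith [ih]

lemma T_bound (σ c : ℝ) (hσ0 : 0 < σ) (hσh : σ ≤ 1/2)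
    (hc : c = 4 / (3 * σ * (1 - σ)))
    (T : ℕ → ℝ) (hT0 : T 0 = 0)
    (hTrec : ∀ k, T (k+1) = σ * T k + 1 / (((k:ℝ)+1) ^ ((2:ℝ)/3))) :
    ∀ k, T k ≤ c / (((k:ℝ)+1) ^ ((1:ℝ)/3)) := by
  have hσ1 : σ < 1 := by linarith
  have hc0 : 0 < c := by
    rw [hc]; exact div_pos (by norm_num) (by nlinarith)
  set t := (2:ℝ) ^ ((1:ℝ)/3) with htdef
  have ht3 : t ^ (3:ℕ) = 2 := cube_rt_sq (by norm_num)
  have ht0 : 0 < t := Real.rpow_pos_of_pos (by norm_num) _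
  have ht1 : 1 ≤ t := by
    rw [htdef]; exact one_le_rpow13 (by norm_num)
  have ht13 : t ≤ 13/10 := by nlinarith [ht3, ht0.le, sq_nonneg (t - 13/10)]
  have hnum : σ * c * t + t ≤ c := by
    have hX : (0:ℝ) < 3 * σ * (1 - σ) := by nlinarith
    have h1 : σ * t ≤ 13/20 :=
      le_trans (mul_le_mul hσh ht13 ht0.le (by norm_num)) (by norm_num)
    have h2 : σ * (1-σ) ≤ 1/4 := by nlinarith [sq_nonneg (σ - 1/2)]
    have h3 : σ * (1-σ) * t ≤ 13/40 := by
      calc σ * (1-σ) * t ≤ (1/4) * (13/10) := mul_le_mul h2 ht13 ht0.le (by norm_num)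
        _ = 13/40 := by norm_num
    rw [hc, ← mul_le_mul_iff_of_pos_right hX]
    have h1σ' : (1:ℝ) - σ ≠ 0 := by linarith
    have hexp : σ * (4 / (3 * σ * (1 - σ))) * t * (3 * σ * (1 - σ))
        = 4 * (σ * t) := by field_simp
    have hexp2 : 4 / (3 * σ * (1 - σ)) * (3 * σ * (1 - σ)) = 4 := by field_simp
    rw [add_mul, hexp, hexp2]
    nlinarith [h1, h3]
  intro k
  induction k with
  | zero =>
    rw [hT0]
    simp only [Nat.cast_zero]
    rw [show (0:ℝ) + 1 = 1 by ring, Real.one_rpow]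
    positivity
  | succ k ih =>
    have hk1 : (0:ℝ) < (k:ℝ) + 1 := by positivity
    have hk2 : (0:ℝ) < (k:ℝ) + 2 := by positivity
    set r := ((k:ℝ)+1) ^ ((1:ℝ)/3) with hrdef
    set s := ((k:ℝ)+2) ^ ((1:ℝ)/3) with hsdef
    have hr0 : 0 < r := Real.rpow_pos_of_pos hk1 _
    have hs0 : 0 < s := Real.rpow_pos_of_pos hk2 _
    have hr1 : 1 ≤ r := by
      rw [hrdef]; exact one_le_rpow13 (by linarith)
    have hst : s ≤ t * r := by
      rw [hsdef, hrdef, htdef, ← Real.mul_rpow (by norm_num) hk1.le]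
      exact Real.rpow_le_rpow hk2.le (by linarith) (by norm_num)
    have h23 : ((k:ℝ)+1) ^ ((2:ℝ)/3) = r ^ (2:ℕ) := rpow23_eq_sq hk1.le
    have hcast : ((k+1 : ℕ):ℝ) + 1 = (k:ℝ) + 2 := by push_cast; ring
    rw [hTrec k, hcast, ← hsdef, h23]
    have step1 : σ * T k + 1 / r ^ (2:ℕ) ≤ σ * (c / r) + 1 / r ^ (2:ℕ) := by
      have := mul_le_mul_of_nonneg_left ih hσ0.le
      linarith
    have hfrac : σ * (c / r) + 1 / r ^ (2:ℕ) = (σ * c * r + 1) / r ^ (2:ℕ) := by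
      field_simp
    have hpoly : (σ * c * r + 1) * s ≤ c * r ^ (2:ℕ) := by
      have hpos : (0:ℝ) < σ * c * r + 1 := by positivity
      calc (σ * c * r + 1) * s ≤ (σ * c * r + 1) * (t * r) :=
            mul_le_mul_of_nonneg_left hst hpos.le
        _ ≤ c * r ^ (2:ℕ) := by
            nlinarith [mul_nonneg (by linarith [hnum] : (0:ℝ) ≤ c - σ*c*t - t) (sq_nonneg r),
              mul_nonneg (mul_nonneg ht0.le hr0.le) (by linarith : (0:ℝ) ≤ r - 1)]
    have step2 : (σ * c * r + 1) / r ^ (2:ℕ) ≤ c / s := by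
      rw [div_le_div_iff₀ (by positivity) hs0]
      exact hpoly
    linarith [step1, step2, hfrac]
end StmtAux

set_option maxHeartbeats 2000000 in
/-- Under the distributed two-time-scale setup with `δ ∈ (σ,1)`, `σ + 2α0 ≤ 1`,
`K*` a positive integer with `K* ≥ (2α0/(δ−σ))^(3/2)`, `σ^k ≤ 1/(k+1)` for all `k ≥ 0`, and
`D = 2√N(R+C)(6α0+1)(K*)^(1/3)/(1−δ)`: for every `k ≥ 0`,
`∑_{i=1}^N (‖y_k^i − ȳ_k‖² + (β_k/α_k)‖x_k^i − x̄_k‖²)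
  ≤ 8D²β0α0(1+ln K*)²σ^(−2K*)/((1−σ)²(k+1)^(2/3)) + 8D²β0α0/((1−σ)²(k+2)^(5/3))`. -/
theorem stmt_1
    {N d : ℕ} (hN : 0 < N) (hd : 0 < d) (R C : ℝ) (hR : 0 ≤ R) (hC : 0 ≤ C)
    (W V : Matrix (Fin N) (Fin N) ℝ)
    (hWnonneg : ∀ i j, 0 ≤ W i j) (hWrow : ∀ i, ∑ j, W i j = 1)
    (hWcol : ∀ j, ∑ i, W i j = 1)
    (hVnonneg : ∀ i j, 0 ≤ V i j) (hVrow : ∀ i, ∑ j, V i j = 1)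
    (hVcol : ∀ j, ∑ i, V i j = 1)
    (σ : ℝ) (hσ0 : 0 < σ) (hσ1 : σ < 1)
    (hWcontract : ∀ v : Fin N → ℝ, (∑ i, v i = 0) → vecEnorm (W.mulVec v) ≤ σ * vecEnorm v)
    (hVcontract : ∀ v : Fin N → ℝ, (∑ i, v i = 0) → vecEnorm (V.mulVec v) ≤ σ * vecEnorm v)
    (A11 A12 A21 A22 : Matrix (Fin d) (Fin d) ℝ)
    (hA11 : ∀ v, vecEnorm (A11.mulVec v) ≤ vecEnorm v)
    (hA12 : ∀ v, vecEnorm (A12.mulVec v) ≤ vecEnorm v)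
    (hA21 : ∀ v, vecEnorm (A21.mulVec v) ≤ vecEnorm v)
    (hA22 : ∀ v, vecEnorm (A22.mulVec v) ≤ vecEnorm v)
    (b1 b2 : Fin N → Fin d → ℝ)
    (hb1 : ∀ i, vecEnorm (b1 i) ≤ R) (hb2 : ∀ i, vecEnorm (b2 i) ≤ R)
    (ξ ψ : ℕ → Fin N → Fin d → ℝ)
    (hξ : ∀ k i, vecEnorm (ξ k i) ≤ C) (hψ : ∀ k i, vecEnorm (ψ k i) ≤ C)
    (α0 β0 : ℝ) (hβ0 : 0 < β0) (hβα : β0 ≤ α0)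
    (α β : ℕ → ℝ)
    (hα : ∀ k, α k = α0 / ((k : ℝ) + 1) ^ ((2 : ℝ) / 3))
    (hβ : ∀ k, β k = β0 / ((k : ℝ) + 1))
    (x y : ℕ → Fin N → Fin d → ℝ)
    (hx0 : ∀ i, x 0 i = 0) (hy0 : ∀ i, y 0 i = 0)
    (hxrec : ∀ k i, x (k + 1) i =
      (∑ j, W i j • x k j) -
        α k • (A11.mulVec (x k i) + A12.mulVec (y k i) - b1 i + ξ k i))
    (hyrec : ∀ k i, y (k + 1) i =
      (∑ j, V i j • y k j) -
        β k • (A21.mulVec (x k i) + A22.mulVec (y k i) - b2 i + ψ k i))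
    (xbar ybar : ℕ → Fin d → ℝ)
    (hxbar : ∀ k, xbar k = (1 / (N : ℝ)) • ∑ i, x k i)
    (hybar : ∀ k, ybar k = (1 / (N : ℝ)) • ∑ i, y k i)
    (Xhat Yhat : ℕ → Matrix (Fin N) (Fin d) ℝ)
    (hXhat : ∀ k, Xhat k = Matrix.of fun i j => x k i j - xbar k j)
    (hYhat : ∀ k, Yhat k = Matrix.of fun i j => y k i j - ybar k j)
    (δ : ℝ) (hδσ : σ < δ) (hδ1 : δ < 1) (hσα : σ + 2 * α0 ≤ 1)
    (Kstar : ℕ) (hKpos : 1 ≤ Kstar)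
    (hKstar : (2 * α0 / (δ - σ)) ^ ((3 : ℝ) / 2) ≤ (Kstar : ℝ))
    (hσk : ∀ k : ℕ, σ ^ k ≤ 1 / ((k : ℝ) + 1))
    (D : ℝ)
    (hD : D = 2 * Real.sqrt N * (R + C) * (6 * α0 + 1) * (Kstar : ℝ) ^ ((1 : ℝ) / 3) / (1 - δ))
    (k : ℕ) :
    (∑ i, (vecEnorm (y k i - ybar k) ^ 2 + (β k / α k) * vecEnorm (x k i - xbar k) ^ 2)) ≤
      8 * D ^ 2 * β0 * α0 * (1 + Real.log Kstar) ^ 2 * (σ ^ (2 * Kstar))⁻¹ /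
        ((1 - σ) ^ 2 * ((k : ℝ) + 1) ^ ((2 : ℝ) / 3)) +
      8 * D ^ 2 * β0 * α0 / ((1 - σ) ^ 2 * ((k : ℝ) + 2) ^ ((5 : ℝ) / 3)) := by
  have hNR : (0:ℝ) < (N:ℝ) := by exact_mod_cast hN
  have hNne : ((N:ℝ)) ≠ 0 := ne_of_gt hNR
  have hα0 : 0 < α0 := lt_of_lt_of_le hβ0 hβα
  have hσle : σ ≤ 1/2 := by
    have h := hσk 1
    norm_num at h
    linarith only [h]
  have h1δ : 0 < 1 - δ := by linarith only [hδ1]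
  have h1σ : 0 < 1 - σ := by linarith only [hσ1]
  set P : ℝ := Real.sqrt N * (R + C) with hPdef
  have hP0 : 0 ≤ P := by
    rw [hPdef]; exact mul_nonneg (Real.sqrt_nonneg _) (by linarith only [hR, hC])
  have hK13ge1 : 1 ≤ (Kstar:ℝ) ^ ((1:ℝ)/3) := one_le_rpow13 (by exact_mod_cast hKpos)
  have hK13nn : 0 ≤ (Kstar:ℝ) ^ ((1:ℝ)/3) := by linarith only [hK13ge1]
  have hD0 : 0 ≤ D := by
    rw [hD]
    apply div_nonneg _ h1δ.le
    have h2s : (0:ℝ) ≤ 2 * Real.sqrt N := by positivity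
    have hRC : (0:ℝ) ≤ R + C := by linarith only [hR, hC]
    exact mul_nonneg (mul_nonneg (mul_nonneg h2s hRC) (by linarith only [hα0])) hK13nn
  have hDeq : (1 - δ) * D = 2 * P * ((6*α0+1) * (Kstar:ℝ)^((1:ℝ)/3)) := by
    rw [hD, hPdef]
    field_simp
  have hE1 : 1 ≤ (6*α0+1) * (Kstar:ℝ)^((1:ℝ)/3) := by
    linarith only [mul_nonneg hα0.le (sub_nonneg.mpr hK13ge1), hK13ge1, hα0]
  have h2P : 2 * P ≤ D := by
    have t1 : 2*P ≤ 2*P*((6*α0+1)*(Kstar:ℝ)^((1:ℝ)/3)) := by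
      linarith only [mul_nonneg hP0 (sub_nonneg.mpr hE1)]
    have t2 : (1-δ)*D ≤ D := by
      linarith only [mul_nonneg (by linarith only [hσ0, hδσ] : (0:ℝ) ≤ δ) hD0]
    linarith only [hDeq, t1, t2]
  -- consensus error sequences
  set sx : ℕ → ℝ := fun n => fnorm (fun i j => x n i j - 1 / (N:ℝ) * ∑ m, x n m j) with hsxdef
  set sy : ℕ → ℝ := fun n => fnorm (fun i j => y n i j - 1 / (N:ℝ) * ∑ m, y n m j) with hsydef
  have hsxnn : ∀ n, 0 ≤ sx n := fun n => fnorm_nonneg _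
  have hsynn : ∀ n, 0 ≤ sy n := fun n => fnorm_nonneg _
  have hsx0 : sx 0 = 0 := by
    have e : (fun i j => x 0 i j - 1/(N:ℝ) * ∑ m, x 0 m j)
        = fun (_ : Fin N) (_ : Fin d) => (0:ℝ) := by
      funext i j; simp [hx0]
    show fnorm _ = 0
    rw [e]
    show Real.sqrt _ = 0
    simp
  have hsy0 : sy 0 = 0 := by
    have e : (fun i j => y 0 i j - 1/(N:ℝ) * ∑ m, y 0 m j)
        = fun (_ : Fin N) (_ : Fin d) => (0:ℝ) := by
      funext i j; simp [hy0]
    show fnorm _ = 0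
    rw [e]
    show Real.sqrt _ = 0
    simp
  -- step-size facts
  have h23pos : ∀ n : ℕ, (0:ℝ) < ((n:ℝ)+1) ^ ((2:ℝ)/3) :=
    fun n => Real.rpow_pos_of_pos (by positivity) _
  have h23ge1 : ∀ n : ℕ, 1 ≤ ((n:ℝ)+1) ^ ((2:ℝ)/3) := by
    intro n
    have hn0 : (0:ℝ) ≤ (n:ℝ) := by positivity
    have := Real.rpow_le_rpow (by norm_num : (0:ℝ) ≤ 1)
      (by linarith only [hn0] : (1:ℝ) ≤ (n:ℝ)+1) (by norm_num : (0:ℝ) ≤ (2:ℝ)/3)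
    rwa [Real.one_rpow] at this
  have h23le : ∀ n : ℕ, ((n:ℝ)+1) ^ ((2:ℝ)/3) ≤ (n:ℝ)+1 := by
    intro n
    have hn0 : (0:ℝ) ≤ (n:ℝ) := by positivity
    have := Real.rpow_le_rpow_of_exponent_le
      (by linarith only [hn0] : (1:ℝ) ≤ (n:ℝ)+1) (by norm_num : (2:ℝ)/3 ≤ 1)
    rwa [Real.rpow_one] at this
  have hαpos : ∀ n, 0 < α n := fun n => by rw [hα]; exact div_pos hα0 (h23pos n)
  have hβpos : ∀ n, 0 < β n := fun n => by rw [hβ]; exact div_pos hβ0 (by positivity)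
  have hαle : ∀ n, α n ≤ α0 := fun n => by rw [hα]; exact div_le_self hα0.le (h23ge1 n)
  have hβleα : ∀ n, β n ≤ α n := fun n => by
    rw [hα, hβ]; exact div_le_div₀ hα0.le hβα (h23pos n) (h23le n)
  have hαeq : ∀ n, α n = α0 * (1/(((n:ℝ)+1)^((2:ℝ)/3))) := fun n => by
    rw [hα, mul_one_div]
  have hβsm : ∀ n, β n ≤ β0 * (1/(((n:ℝ)+1)^((2:ℝ)/3))) := fun n => by
    rw [hβ, mul_one_div]; exact div_le_div₀ hβ0.le le_rfl (h23pos n) (h23le n)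
  -- one-step inequalities
  have hstepx : ∀ n, sx (n+1) ≤ σ * sx n + α n * (sx n + sy n + P) := by
    intro n
    simp only [hsxdef, hsydef, hPdef]
    exact step_bound hN W hWrow hWcol σ hσ0.le hWcontract A11 A12 hA11 hA12 b1 R hR hb1
      (ξ n) C hC (hξ n) (α n) (hαpos n).le (x n) (y n) (x (n+1)) (hxrec n)
  have hstepy : ∀ n, sy (n+1) ≤ σ * sy n + β n * (sy n + sx n + P) := by
    intro n
    have hyrec' : ∀ i, y (n+1) i = (∑ j, V i j • y n j)
        - β n • (A22.mulVec (y n i) + A21.mulVec (x n i) - b2 i + ψ n i) := by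
      intro i
      rw [hyrec n i, add_comm (A21.mulVec (x n i)) (A22.mulVec (y n i))]
    simp only [hsxdef, hsydef, hPdef]
    exact step_bound hN V hVrow hVcol σ hσ0.le hVcontract A22 A21 hA22 hA21 b2 R hR hb2
      (ψ n) C hC (hψ n) (β n) (hβpos n).le (y n) (x n) (y (n+1)) hyrec'
  -- rewrite LHS of goal
  have hLHSy : ∑ i, vecEnorm (y k i - ybar k) ^ 2 = sy k ^ 2 := by
    have e : sy k ^ 2 = ∑ i, ∑ j, (y k i j - 1/(N:ℝ) * ∑ m, y k m j)^2 := fnorm_sq _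
    rw [e]
    refine Finset.sum_congr rfl fun i _ => ?_
    rw [vecEnorm_sq]
    refine Finset.sum_congr rfl fun j _ => ?_
    rw [hybar k]
    simp [Finset.sum_apply]
  have hLHSx : ∑ i, vecEnorm (x k i - xbar k) ^ 2 = sx k ^ 2 := by
    have e : sx k ^ 2 = ∑ i, ∑ j, (x k i j - 1/(N:ℝ) * ∑ m, x k m j)^2 := fnorm_sq _
    rw [e]
    refine Finset.sum_congr rfl fun i _ => ?_
    rw [vecEnorm_sq]
    refine Finset.sum_congr rfl fun j _ => ?_
    rw [hxbar k]
    simp [Finset.sum_apply]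
  clear_value sx sy P
  -- combined step
  have hcomb : ∀ n, sx (n+1) + sy (n+1)
      ≤ σ * (sx n + sy n) + 2 * (α n * (sx n + sy n + P)) := by
    intro n
    have h1 := hstepx n
    have h2 := hstepy n
    have hnn : (0:ℝ) ≤ sy n + sx n + P := by linarith only [hsxnn n, hsynn n, hP0]
    have h2' : β n * (sy n + sx n + P) ≤ α n * (sy n + sx n + P) :=
      mul_le_mul_of_nonneg_right (hβleα n) hnn
    have e1 : α n * (sy n + sx n + P) = α n * (sx n + sy n + P) := by ring
    rw [e1] at h2'
    linarith only [h1, h2, h2']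
  -- uniform boundedness
  have huD : ∀ n, sx n + sy n ≤ D := by
    have hphase1 : ∀ n, sx n + sy n ≤ 2*P*∑ t ∈ Finset.range n, α t := by
      intro n
      induction n with
      | zero => simp [hsx0, hsy0]
      | succ n ih =>
        have hc := hcomb n
        have hσ2 : σ + 2*α n ≤ 1 := by linarith only [hαle n, hσα]
        rw [Finset.sum_range_succ, mul_add]
        have hunn : (0:ℝ) ≤ sx n + sy n := by linarith only [hsxnn n, hsynn n]
        linarith only [hc, ih,
          mul_nonneg (by linarith only [hσ2] : (0:ℝ) ≤ 1 - σ - 2*α n) hunn]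
    have hsum : ∀ n, n ≤ Kstar →
        (∑ t ∈ Finset.range n, α t) ≤ 3*α0*(Kstar:ℝ)^((1:ℝ)/3) := by
      intro n hn
      have e : (∑ t ∈ Finset.range n, α t)
          = α0 * ∑ t ∈ Finset.range n, 1/(((t:ℝ)+1)^((2:ℝ)/3)) := by
        rw [Finset.mul_sum]
        exact Finset.sum_congr rfl fun t _ => by rw [hαeq t]
      rw [e]
      have h1 := sum_inv23_le n
      have h2 : ((n:ℝ))^((1:ℝ)/3) ≤ ((Kstar:ℝ))^((1:ℝ)/3) :=
        rpow13_mono (by positivity) (by exact_mod_cast hn)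
      linarith only [mul_le_mul_of_nonneg_left h1 hα0.le,
        mul_le_mul_of_nonneg_left h2 (by linarith only [hα0] : (0:ℝ) ≤ 3*α0)]
    have hK1 : ∀ n, n ≤ Kstar → sx n + sy n ≤ (1-δ)*D := by
      intro n hn
      have hp := hphase1 n
      have h2 := hsum n hn
      have s1 : 2*P*(∑ t ∈ Finset.range n, α t) ≤ 2*P*(3*α0*(Kstar:ℝ)^((1:ℝ)/3)) :=
        mul_le_mul_of_nonneg_left h2 (by linarith only [hP0])
      have s2 : 2*P*(3*α0*(Kstar:ℝ)^((1:ℝ)/3)) ≤ (1-δ)*D := by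
        rw [hDeq]
        linarith only [mul_nonneg (mul_nonneg hP0 hK13nn) hα0.le,
          mul_nonneg hP0 hK13nn]
      linarith only [hp, s1, s2]
    have hδD : (1-δ)*D ≤ D := by
      linarith only [mul_nonneg (by linarith only [hσ0, hδσ] : (0:ℝ) ≤ δ) hD0]
    have hαsm : ∀ n, Kstar ≤ n → σ + 2*α n ≤ δ := by
      intro n hn
      have hX0 : (0:ℝ) ≤ 2*α0/(δ-σ) := div_nonneg (by linarith only [hα0]) (by linarith only [hδσ])
      have hXK : 2*α0/(δ-σ) ≤ ((n:ℝ)+1)^((2:ℝ)/3) := by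
        have e1 : ((2*α0/(δ-σ))^((3:ℝ)/2))^((2:ℝ)/3) = 2*α0/(δ-σ) := by
          rw [← Real.rpow_mul hX0]
          norm_num
        have c2 : (Kstar:ℝ) ≤ (n:ℝ)+1 := by
          have : (Kstar:ℝ) ≤ (n:ℝ) := by exact_mod_cast hn
          linarith only [this]
        calc 2*α0/(δ-σ) = ((2*α0/(δ-σ))^((3:ℝ)/2))^((2:ℝ)/3) := e1.symm
          _ ≤ ((Kstar:ℝ))^((2:ℝ)/3) :=
              Real.rpow_le_rpow (Real.rpow_nonneg hX0 _) hKstar (by norm_num)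
          _ ≤ ((n:ℝ)+1)^((2:ℝ)/3) :=
              Real.rpow_le_rpow (by positivity) c2 (by norm_num)
      have hαn : α n ≤ (δ-σ)/2 := by
        rw [hα, div_le_iff₀ (h23pos n)]
        have hne : δ - σ ≠ 0 := ne_of_gt (by linarith only [hδσ])
        have g1 : (δ-σ)/2 * (2*α0/(δ-σ)) = α0 := by field_simp
        have g2 : (δ-σ)/2 * (2*α0/(δ-σ)) ≤ (δ-σ)/2 * (((n:ℝ)+1)^((2:ℝ)/3)) :=
          mul_le_mul_of_nonneg_left hXK (by linarith only [hδσ])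
        linarith only [g1, g2]
      linarith only [hαn]
    have hKle : ∀ m : ℕ, sx (Kstar+m) + sy (Kstar+m) ≤ D := by
      intro m
      induction m with
      | zero => simpa using le_trans (hK1 Kstar le_rfl) hδD
      | succ m ih =>
        have hc := hcomb (Kstar + m)
        have hsm := hαsm (Kstar+m) (Nat.le_add_right _ _)
        have hδ0 : (0:ℝ) ≤ δ := by linarith only [hσ0, hδσ]
        have hunn : (0:ℝ) ≤ sx (Kstar+m) + sy (Kstar+m) := by
          linarith only [hsxnn (Kstar+m), hsynn (Kstar+m)]
        have h2αP : 2*(α (Kstar+m)*P) ≤ (1-δ)*D := by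
          have g1 : α (Kstar+m) * P ≤ α0 * P := mul_le_mul_of_nonneg_right (hαle _) hP0
          have g2 : 2*(α0*P) ≤ (1-δ)*D := by
            rw [hDeq]
            linarith only [mul_nonneg hP0
              (by linarith only [mul_nonneg hα0.le (sub_nonneg.mpr hK13ge1), hK13ge1, hα0] :
                (0:ℝ) ≤ (6*α0+1)*(Kstar:ℝ)^((1:ℝ)/3) - α0)]
          linarith only [g1, g2]
        have key : sx (Kstar+m+1) + sy (Kstar+m+1)
            ≤ δ*(sx (Kstar+m)+sy (Kstar+m)) + (1-δ)*D := by
          linarith only [hc, mul_nonneg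
            (by linarith only [hsm] : (0:ℝ) ≤ δ - σ - 2*α (Kstar+m)) hunn, h2αP]
        have hmono : δ*(sx (Kstar+m)+sy (Kstar+m)) ≤ δ*D := mul_le_mul_of_nonneg_left ih hδ0
        have hfin : sx (Kstar+m+1) + sy (Kstar+m+1) ≤ D := by linarith only [key, hmono, h1δ, hδD]
        show sx (Kstar+(m+1)) + sy (Kstar+(m+1)) ≤ D
        have : Kstar+(m+1) = Kstar+m+1 := rfl
        rw [this]
        exact hfin
    intro n
    rcases le_or_gt n Kstar with h | h
    · exact le_trans (hK1 n h) hδD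
    · obtain ⟨m, rfl⟩ : ∃ m, n = Kstar + m := ⟨n - Kstar, by omega⟩
      exact hKle m
  -- refined recursions
  have hsx2 : ∀ n, sx (n+1) ≤ σ * sx n + 3/2*D*α0 * (1/(((n:ℝ)+1)^((2:ℝ)/3))) := by
    intro n
    have h1 := hstepx n
    have hle : sx n + sy n + P ≤ 3/2*D := by linarith only [huD n, h2P]
    have h2 : α n * (sx n + sy n + P) ≤ α n * (3/2*D) :=
      mul_le_mul_of_nonneg_left hle (hαpos n).le
    have e : α n * (3/2*D) = 3/2*D*α0 * (1/(((n:ℝ)+1)^((2:ℝ)/3))) := by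
      rw [hαeq n]; ring
    linarith only [h1, h2, e]
  have hD32 : (0:ℝ) ≤ 3/2*D := by linarith only [hD0]
  have hsy2 : ∀ n, sy (n+1) ≤ σ * sy n + 3/2*D*β0 * (1/(((n:ℝ)+1)^((2:ℝ)/3))) := by
    intro n
    have h1 := hstepy n
    have hle : sy n + sx n + P ≤ 3/2*D := by linarith only [huD n, h2P]
    have h2 : β n * (sy n + sx n + P) ≤ β n * (3/2*D) :=
      mul_le_mul_of_nonneg_left hle (hβpos n).le
    have h3 : β n * (3/2*D) ≤ (β0 * (1/(((n:ℝ)+1)^((2:ℝ)/3)))) * (3/2*D) :=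
      mul_le_mul_of_nonneg_right (hβsm n) hD32
    have e : (β0 * (1/(((n:ℝ)+1)^((2:ℝ)/3)))) * (3/2*D)
        = 3/2*D*β0 * (1/(((n:ℝ)+1)^((2:ℝ)/3))) := by ring
    linarith only [h1, h2, h3, e]
  -- the comparison sequence T
  set T : ℕ → ℝ := fun n =>
    ∑ t ∈ Finset.range n, σ^(n-1-t) * (1/(((t:ℝ)+1)^((2:ℝ)/3))) with hTdef
  have hT0 : T 0 = 0 := by simp [hTdef]
  have hTrec : ∀ n, T (n+1) = σ * T n + 1/(((n:ℝ)+1)^((2:ℝ)/3)) := by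
    intro n
    simp only [hTdef]
    rw [Finset.sum_range_succ]
    have e1 : ∀ t ∈ Finset.range n,
        σ^(n+1-1-t) * (1/(((t:ℝ)+1)^((2:ℝ)/3)))
          = σ * (σ^(n-1-t) * (1/(((t:ℝ)+1)^((2:ℝ)/3)))) := by
      intro t ht
      have ht' : t < n := Finset.mem_range.mp ht
      have e2 : n+1-1-t = (n-1-t)+1 := by omega
      rw [e2, pow_succ]
      ring
    rw [Finset.sum_congr rfl e1, ← Finset.mul_sum]
    have e3 : n+1-1-n = 0 := by omega
    rw [e3, pow_zero, one_mul]
  have hTnn : ∀ n, 0 ≤ T n := fun n =>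
    Finset.sum_nonneg fun t _ => mul_nonneg (pow_nonneg hσ0.le _) (by positivity)
  clear_value T
  set c : ℝ := 4/(3*σ*(1-σ)) with hcdef
  have hTb := T_bound σ c hσ0 hσle hcdef T hT0 hTrec
  -- unrolled bounds
  have hsxT : ∀ n, sx n ≤ 3/2*D*α0 * T n := by
    intro n
    induction n with
    | zero => rw [hsx0, hT0, mul_zero]
    | succ n ih =>
      have h := hsx2 n
      have h2 : σ * sx n ≤ σ * (3/2*D*α0*T n) := mul_le_mul_of_nonneg_left ih hσ0.le
      have e : 3/2*D*α0*(σ*T n + 1/(((n:ℝ)+1)^((2:ℝ)/3)))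
          = σ*(3/2*D*α0*T n) + 3/2*D*α0 * (1/(((n:ℝ)+1)^((2:ℝ)/3))) := by ring
      rw [hTrec n]
      linarith only [h, h2, e]
  have hsyT : ∀ n, sy n ≤ 3/2*D*β0 * T n := by
    intro n
    induction n with
    | zero => rw [hsy0, hT0, mul_zero]
    | succ n ih =>
      have h := hsy2 n
      have h2 : σ * sy n ≤ σ * (3/2*D*β0*T n) := mul_le_mul_of_nonneg_left ih hσ0.le
      have e : 3/2*D*β0*(σ*T n + 1/(((n:ℝ)+1)^((2:ℝ)/3)))
          = σ*(3/2*D*β0*T n) + 3/2*D*β0 * (1/(((n:ℝ)+1)^((2:ℝ)/3))) := by ring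
      rw [hTrec n]
      linarith only [h, h2, e]
  have hLHS : (∑ i, (vecEnorm (y k i - ybar k) ^ 2 + (β k / α k) * vecEnorm (x k i - xbar k) ^ 2))
      = sy k ^ 2 + (β k / α k) * sx k ^ 2 := by
    rw [Finset.sum_add_distrib, ← Finset.mul_sum, hLHSy, hLHSx]
  rw [hLHS]
  -- final numeric chain
  have hk1pos : (0:ℝ) < (k:ℝ)+1 := by positivity
  set r : ℝ := ((k:ℝ)+1)^((1:ℝ)/3) with hrdef
  have hr0 : 0 < r := Real.rpow_pos_of_pos hk1pos _
  have hk0 : (0:ℝ) ≤ (k:ℝ) := Nat.cast_nonneg k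
  have hr1 : 1 ≤ r := by rw [hrdef]; exact one_le_rpow13 (by linarith only [hk0])
  have hr2 : r^(2:ℕ) = ((k:ℝ)+1)^((2:ℝ)/3) := by
    rw [hrdef]; exact (rpow23_eq_sq hk1pos.le).symm
  have hβαq : β k / α k ≤ β0/α0 := by
    rw [hα, hβ, div_div_div_comm]
    have hQ : 1 ≤ ((k:ℝ)+1)/(((k:ℝ)+1)^((2:ℝ)/3)) :=
      (one_le_div (h23pos k)).mpr (h23le k)
    exact div_le_self (div_nonneg hβ0.le hα0.le) hQ
  have hβαnn : 0 ≤ β k / α k := div_nonneg (hβpos k).le (hαpos k).le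
  have hT2 : T k^2 ≤ c^2 / (((k:ℝ)+1)^((2:ℝ)/3)) := by
    have h := pow_le_pow_left₀ (hTnn k) (hTb k) 2
    rw [div_pow, hr2] at h
    exact h
  have hsy2b : sy k^2 ≤ (3/2*D*β0*T k)^2 := pow_le_pow_left₀ (hsynn k) (hsyT k) 2
  have hsx2b : sx k^2 ≤ (3/2*D*α0*T k)^2 := pow_le_pow_left₀ (hsxnn k) (hsxT k) 2
  have e3 : (β0/α0)*((3/2*D*α0*T k)^2) = 9/4*D^2*β0*α0*(T k)^2 := by
    field_simp
    ring
  have e4 : (3/2*D*β0*T k)^2 = 9/4*D^2*β0^2*(T k)^2 := by ring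
  have h5 : 9/4*D^2*β0^2*(T k)^2 ≤ 9/4*D^2*β0*α0*(T k)^2 := by
    linarith only [mul_nonneg (mul_nonneg (sq_nonneg (D*(T k))) hβ0.le) (sub_nonneg.mpr hβα)]
  have h6 : (β k/α k)*sx k^2 ≤ (β0/α0)*((3/2*D*α0*T k)^2) :=
    mul_le_mul hβαq hsx2b (sq_nonneg _) (div_nonneg hβ0.le hα0.le)
  have hmain : sy k^2 + (β k/α k)*sx k^2 ≤ 9/2*D^2*β0*α0*(T k)^2 := by
    linarith only [hsy2b, e4, h5, h6, e3]
  have hnum0 : (0:ℝ) ≤ 9/2*D^2*β0*α0 :=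
    mul_nonneg (mul_nonneg (by positivity) hβ0.le) hα0.le
  have hchain : 9/2*D^2*β0*α0*(T k)^2
      ≤ 8*D^2*β0*α0/(σ^2*(1-σ)^2*(((k:ℝ)+1)^((2:ℝ)/3))) := by
    have h := mul_le_mul_of_nonneg_left hT2 hnum0
    have hne1 : σ ≠ 0 := ne_of_gt hσ0
    have hne2 : (1:ℝ)-σ ≠ 0 := ne_of_gt h1σ
    have hne3 : (((k:ℝ)+1)^((2:ℝ)/3)) ≠ 0 := ne_of_gt (h23pos k)
    have e : 9/2*D^2*β0*α0*(c^2/(((k:ℝ)+1)^((2:ℝ)/3)))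
        = 8*D^2*β0*α0/(σ^2*(1-σ)^2*(((k:ℝ)+1)^((2:ℝ)/3))) := by
      rw [hcdef]
      field_simp
      ring
    linarith only [h, e]
  have hRHS1 : 8*D^2*β0*α0/(σ^2*(1-σ)^2*(((k:ℝ)+1)^((2:ℝ)/3)))
      ≤ 8 * D ^ 2 * β0 * α0 * (1 + Real.log Kstar) ^ 2 * (σ ^ (2 * Kstar))⁻¹ /
        ((1 - σ) ^ 2 * ((k : ℝ) + 1) ^ ((2 : ℝ) / 3)) := by
    have hlog : (0:ℝ) ≤ Real.log Kstar := Real.log_nonneg (by exact_mod_cast hKpos)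
    have hlog2 : 1 ≤ (1+Real.log Kstar)^2 := by
      have e : (1+Real.log Kstar)^2 = 1 + 2*Real.log Kstar + (Real.log Kstar)^2 := by ring
      linarith only [e, hlog, sq_nonneg (Real.log Kstar)]
    have hpow : σ^(2*Kstar) ≤ σ^2 := pow_le_pow_of_le_one hσ0.le hσ1.le (by omega)
    have hinv : (σ^2)⁻¹ ≤ (σ^(2*Kstar))⁻¹ :=
      inv_anti₀ (pow_pos hσ0 _) hpow
    have hcombi : (σ^2)⁻¹ ≤ (1+Real.log Kstar)^2*(σ^(2*Kstar))⁻¹ := by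
      calc (σ^2)⁻¹ ≤ (σ^(2*Kstar))⁻¹ := hinv
        _ = 1*(σ^(2*Kstar))⁻¹ := (one_mul _).symm
        _ ≤ (1+Real.log Kstar)^2*(σ^(2*Kstar))⁻¹ :=
            mul_le_mul_of_nonneg_right hlog2 (by positivity)
    have base_nn : (0:ℝ) ≤ 8*D^2*β0*α0/((1-σ)^2*(((k:ℝ)+1)^((2:ℝ)/3))) := by
      apply div_nonneg _ (by positivity)
      linarith only [mul_nonneg (sq_nonneg D) (mul_nonneg hβ0.le hα0.le)]
    have hσne : σ ≠ 0 := ne_of_gt hσ0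
    have h1σne : (1:ℝ)-σ ≠ 0 := ne_of_gt h1σ
    have hκne : (((k:ℝ)+1)^((2:ℝ)/3)) ≠ 0 := ne_of_gt (h23pos k)
    have hσKne : (σ^(2*Kstar)) ≠ 0 := pow_ne_zero _ hσne
    have eL : 8*D^2*β0*α0/(σ^2*(1-σ)^2*(((k:ℝ)+1)^((2:ℝ)/3)))
        = (8*D^2*β0*α0/((1-σ)^2*(((k:ℝ)+1)^((2:ℝ)/3)))) * (σ^2)⁻¹ := by
      field_simp
    have eR : 8 * D ^ 2 * β0 * α0 * (1 + Real.log Kstar) ^ 2 * (σ ^ (2 * Kstar))⁻¹ /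
        ((1 - σ) ^ 2 * ((k : ℝ) + 1) ^ ((2 : ℝ) / 3))
        = (8*D^2*β0*α0/((1-σ)^2*(((k:ℝ)+1)^((2:ℝ)/3))))
          * ((1+Real.log Kstar)^2*(σ^(2*Kstar))⁻¹) := by
      field_simp
    rw [eL, eR]
    exact mul_le_mul_of_nonneg_left hcombi base_nn
  have hterm2 : (0:ℝ) ≤ 8 * D ^ 2 * β0 * α0 / ((1 - σ) ^ 2 * ((k : ℝ) + 2) ^ ((5 : ℝ) / 3)) := by
    apply div_nonneg _ (by positivity)
    linarith only [mul_nonneg (sq_nonneg D) (mul_nonneg hβ0.le hα0.le)]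
  linarith only [hmain, hchain, hRHS1, hterm2]
end

section
/- Under the distributed two-time-scale setup, for every k ≥ 0 the Frobenius norms of the consensus-error matrices satisfy ‖X̂_{k+1}‖ ≤ (σ + α_k)·‖X̂_k‖ + α_k·‖Ŷ_k‖ + √N·(R + C)·α_k. -/
/-- The Euclidean norm of a vector (represented as a function into `ℝ`). -/
noncomputable def enormVec {n : ℕ} (v : Fin n → ℝ) : ℝ :=
  Real.sqrt (∑ i, v i ^ 2)

/-!
Stack the agents' iterates as the rows of `N × d` matrices `X_k`, `Y_k`, `B₁`, `Ξ_k`. The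
consensus errors are `X̂ = P X`, `Ŷ = P Y` for the centering projection `P = I - 11ᵀ/N`,
and since `W` is doubly stochastic, `P W = W P`. Hence
`X̂_{k+1} = W X̂_k - α_k (X̂_k A₁₁ᵀ + Ŷ_k A₁₂ᵀ - P B₁ + P Ξ_k)`.
The columns of `X̂_k` sum to zero, so `W` shrinks `X̂_k` by `σ` column by column; the `A₁ⱼ`
are non-expansive row by row, and `P` is non-expansive with `‖B₁‖ ≤ √N R`, `‖Ξ_k‖ ≤ √N C`.
-/

open scoped Matrix

section ConsensusError

open Matrix

attribute [local instance] Matrix.frobeniusNormedAddCommGroup Matrix.frobeniusNormedSpace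

variable {N d : ℕ}

lemma enormVec_nonneg (v : Fin N → ℝ) : 0 ≤ enormVec v := Real.sqrt_nonneg _

lemma fnorm_eq_norm_s6 (M : Matrix (Fin N) (Fin d) ℝ) : fnorm M = ‖M‖ := by
  simp only [fnorm, frobenius_norm_def, Real.norm_eq_abs, Real.rpow_two, sq_abs, Real.sqrt_eq_rpow]

lemma fnorm_add_le_s6 (A B : Matrix (Fin N) (Fin d) ℝ) : fnorm (A + B) ≤ fnorm A + fnorm B := by
  simpa only [fnorm_eq_norm_s6] using norm_add_le A B

lemma fnorm_sub_le (A B : Matrix (Fin N) (Fin d) ℝ) : fnorm (A - B) ≤ fnorm A + fnorm B := by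
  simpa only [fnorm_eq_norm_s6] using norm_sub_le A B

lemma fnorm_smul (c : ℝ) (A : Matrix (Fin N) (Fin d) ℝ) : fnorm (c • A) = |c| * fnorm A := by
  simp only [fnorm_eq_norm_s6, norm_smul, Real.norm_eq_abs]

lemma fnorm_eq_sqrt_sum_row (M : Matrix (Fin N) (Fin d) ℝ) :
    fnorm M = √(∑ i, enormVec (M i) ^ 2) := by
  simp only [fnorm, enormVec, Real.sq_sqrt (Finset.sum_nonneg fun _ _ => sq_nonneg _)]

lemma fnorm_eq_sqrt_sum_col (M : Matrix (Fin N) (Fin d) ℝ) :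
    fnorm M = √(∑ j, enormVec (Mᵀ j) ^ 2) := by
  simp only [fnorm, enormVec, Real.sq_sqrt (Finset.sum_nonneg fun _ _ => sq_nonneg _),
    transpose_apply, Finset.sum_comm (γ := Fin N)]

lemma fnorm_le_of_row_le {M M' : Matrix (Fin N) (Fin d) ℝ}
    (h : ∀ i, enormVec (M i) ≤ enormVec (M' i)) : fnorm M ≤ fnorm M' := by
  rw [fnorm_eq_sqrt_sum_row, fnorm_eq_sqrt_sum_row]
  gcongr with i
  · exact enormVec_nonneg _
  · exact h i

lemma fnorm_le_sqrt_mul_of_row_le {M : Matrix (Fin N) (Fin d) ℝ} {c : ℝ} (hc : 0 ≤ c)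
    (h : ∀ i, enormVec (M i) ≤ c) : fnorm M ≤ √N * c := by
  rw [fnorm_eq_sqrt_sum_row, ← Real.sqrt_sq hc, ← Real.sqrt_mul (Nat.cast_nonneg N)]
  gcongr
  calc ∑ i, enormVec (M i) ^ 2 ≤ ∑ _i : Fin N, c ^ 2 := by
        gcongr with i
        · exact enormVec_nonneg _
        · exact h i
    _ = N * c ^ 2 := by simp

lemma fnorm_mul_transpose_le (M : Matrix (Fin N) (Fin d) ℝ) {A : Matrix (Fin d) (Fin d) ℝ}
    (hA : ∀ v, enormVec (A *ᵥ v) ≤ enormVec v) : fnorm (M * Aᵀ) ≤ fnorm M :=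
  fnorm_le_of_row_le fun i => by
    rw [mul_apply_eq_vecMul, vecMul_transpose]; exact hA _

lemma fnorm_mul_le_of_contract {W : Matrix (Fin N) (Fin N) ℝ} {σ : ℝ} (hσ : 0 ≤ σ)
    (hW : ∀ v : Fin N → ℝ, ∑ i, v i = 0 → enormVec (W *ᵥ v) ≤ σ * enormVec v)
    {M : Matrix (Fin N) (Fin d) ℝ} (hM : ∀ j, ∑ i, M i j = 0) :
    fnorm (W * M) ≤ σ * fnorm M := by
  rw [fnorm_eq_sqrt_sum_col, fnorm_eq_sqrt_sum_col, ← Real.sqrt_sq hσ,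
    ← Real.sqrt_mul (sq_nonneg σ), Finset.mul_sum]
  gcongr with j
  rw [← mul_pow, transpose_mul, mul_apply_eq_vecMul, vecMul_transpose]
  gcongr
  · exact enormVec_nonneg _
  · exact hW _ (hM j)

lemma sum_sub_mean_sq_le (t : Fin N → ℝ) :
    ∑ i, (t i - (N : ℝ)⁻¹ * ∑ l, t l) ^ 2 ≤ ∑ i, t i ^ 2 := by
  have hexpand : ∑ i, (t i - (N : ℝ)⁻¹ * ∑ l, t l) ^ 2
      = ∑ i, t i ^ 2 - (N : ℝ)⁻¹ * (∑ l, t l) ^ 2 := by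
    rcases Nat.eq_zero_or_pos N with rfl | hN
    · simp
    simp only [sub_sq, Finset.sum_add_distrib, Finset.sum_sub_distrib, ← Finset.sum_mul,
      ← Finset.mul_sum, Finset.sum_const, Finset.card_univ, Fintype.card_fin, nsmul_eq_mul]
    field_simp
    ring
  rw [hexpand]
  linarith [show 0 ≤ (N : ℝ)⁻¹ * (∑ l, t l) ^ 2 by positivity]

noncomputable def centering (N : ℕ) : Matrix (Fin N) (Fin N) ℝ :=
  1 - (N : ℝ)⁻¹ • of fun _ _ => 1

lemma centering_mul_apply (M : Matrix (Fin N) (Fin d) ℝ) (i : Fin N) (j : Fin d) :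
    (centering N * M) i j = M i j - (N : ℝ)⁻¹ * ∑ l, M l j := by
  rw [centering, Matrix.sub_mul, Matrix.one_mul, Matrix.smul_mul]
  simp [mul_apply, Finset.mul_sum]

lemma sum_centering_mul_apply_eq_zero (hN : 0 < N) (M : Matrix (Fin N) (Fin d) ℝ) (j : Fin d) :
    ∑ i, (centering N * M) i j = 0 := by
  simp only [centering_mul_apply, Finset.sum_sub_distrib, Finset.sum_const, Finset.card_univ,
    Fintype.card_fin, nsmul_eq_mul]
  field_simp
  ring

lemma fnorm_centering_mul_le (M : Matrix (Fin N) (Fin d) ℝ) :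
    fnorm (centering N * M) ≤ fnorm M := by
  unfold fnorm
  rw [Finset.sum_comm, Finset.sum_comm (f := fun i j => M i j ^ 2)]
  refine Real.sqrt_le_sqrt (Finset.sum_le_sum fun j _ => ?_)
  simpa only [centering_mul_apply] using sum_sub_mean_sq_le fun i => M i j

lemma centering_mul_mul_comm {n : Type*} {W : Matrix (Fin N) (Fin N) ℝ}
    (hrow : ∀ i, ∑ j, W i j = 1) (hcol : ∀ j, ∑ i, W i j = 1) (M : Matrix (Fin N) n ℝ) :
    centering N * (W * M) = W * (centering N * M) := by
  have hcomm : centering N * W = W * centering N := by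
    rw [centering, mul_sub, sub_mul, one_mul, mul_one, Matrix.mul_smul, Matrix.smul_mul]
    congr 2
    ext i j
    simp [mul_apply, hrow, hcol]
  rw [← Matrix.mul_assoc, hcomm, Matrix.mul_assoc]

lemma fnorm_centering_mul_step_le (hN : 0 < N) {W : Matrix (Fin N) (Fin N) ℝ}
    (hrow : ∀ i, ∑ j, W i j = 1) (hcol : ∀ j, ∑ i, W i j = 1) {σ : ℝ} (hσ : 0 ≤ σ)
    (hW : ∀ v : Fin N → ℝ, ∑ i, v i = 0 → enormVec (W *ᵥ v) ≤ σ * enormVec v)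
    {A A' : Matrix (Fin d) (Fin d) ℝ} (hA : ∀ v, enormVec (A *ᵥ v) ≤ enormVec v)
    (hA' : ∀ v, enormVec (A' *ᵥ v) ≤ enormVec v) {R C a : ℝ} (hR : 0 ≤ R) (hC : 0 ≤ C)
    (ha : 0 ≤ a) (X Y B Ξ : Matrix (Fin N) (Fin d) ℝ) (hB : ∀ i, enormVec (B i) ≤ R)
    (hΞ : ∀ i, enormVec (Ξ i) ≤ C) :
    fnorm (centering N * (W * X - a • (X * Aᵀ + Y * A'ᵀ - B + Ξ))) ≤
      (σ + a) * fnorm (centering N * X) + a * fnorm (centering N * Y) + √N * (R + C) * a := by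
  rw [Matrix.mul_sub, Matrix.mul_smul, centering_mul_mul_comm hrow hcol, Matrix.mul_add,
    Matrix.mul_sub, Matrix.mul_add, ← Matrix.mul_assoc _ X, ← Matrix.mul_assoc _ Y]
  set Xh := centering N * X
  set Yh := centering N * Y
  have hWXh : fnorm (W * Xh) ≤ σ * fnorm Xh :=
    fnorm_mul_le_of_contract hσ hW (sum_centering_mul_apply_eq_zero hN X)
  set U := Xh * Aᵀ + Yh * A'ᵀ - centering N * B + centering N * Ξ
  have hU : fnorm U ≤ fnorm Xh + fnorm Yh + √N * R + √N * C := by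
    have hXhA := fnorm_mul_transpose_le Xh hA
    have hYhA' := fnorm_mul_transpose_le Yh hA'
    have hPB := (fnorm_centering_mul_le B).trans (fnorm_le_sqrt_mul_of_row_le hR hB)
    have hPΞ := (fnorm_centering_mul_le Ξ).trans (fnorm_le_sqrt_mul_of_row_le hC hΞ)
    linarith [fnorm_add_le_s6 (Xh * Aᵀ + Yh * A'ᵀ - centering N * B) (centering N * Ξ),
      fnorm_sub_le (Xh * Aᵀ + Yh * A'ᵀ) (centering N * B), fnorm_add_le_s6 (Xh * Aᵀ) (Yh * A'ᵀ)]
  calc _ ≤ fnorm (W * Xh) + a * fnorm U :=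
        (fnorm_sub_le _ _).trans_eq (by rw [fnorm_smul, abs_of_nonneg ha])
    _ ≤ σ * fnorm Xh + a * (fnorm Xh + fnorm Yh + √N * R + √N * C) := by gcongr
    _ = (σ + a) * fnorm Xh + a * fnorm Yh + √N * (R + C) * a := by ring

end ConsensusError

theorem stmt_6_general
    {N d : ℕ} (hN : 0 < N) (R C : ℝ) (hR : 0 ≤ R) (hC : 0 ≤ C)
    (W : Matrix (Fin N) (Fin N) ℝ)
    (hWrow : ∀ i, ∑ j, W i j = 1)
    (hWcol : ∀ j, ∑ i, W i j = 1)
    (σ : ℝ) (hσ0 : 0 < σ)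
    (hWcontract : ∀ v : Fin N → ℝ, (∑ i, v i = 0) → enormVec (W.mulVec v) ≤ σ * enormVec v)
    (A11 A12 : Matrix (Fin d) (Fin d) ℝ)
    (hA11 : ∀ v, enormVec (A11.mulVec v) ≤ enormVec v)
    (hA12 : ∀ v, enormVec (A12.mulVec v) ≤ enormVec v)
    (b1 : Fin N → Fin d → ℝ)
    (hb1 : ∀ i, enormVec (b1 i) ≤ R)
    (ξ : ℕ → Fin N → Fin d → ℝ)
    (hξ : ∀ k i, enormVec (ξ k i) ≤ C)
    (α0 β0 : ℝ) (hβ0 : 0 < β0) (hβα : β0 ≤ α0)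
    (α : ℕ → ℝ)
    (hα : ∀ k, α k = α0 / ((k : ℝ) + 1) ^ ((2 : ℝ) / 3))
    (x y : ℕ → Fin N → Fin d → ℝ)
    (hxrec : ∀ k i, x (k + 1) i =
      (∑ j, W i j • x k j) -
        α k • (A11.mulVec (x k i) + A12.mulVec (y k i) - b1 i + ξ k i))
    (xbar ybar : ℕ → Fin d → ℝ)
    (hxbar : ∀ k, xbar k = (1 / (N : ℝ)) • ∑ i, x k i)
    (hybar : ∀ k, ybar k = (1 / (N : ℝ)) • ∑ i, y k i)
    (Xhat Yhat : ℕ → Matrix (Fin N) (Fin d) ℝ)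
    (hXhat : ∀ k, Xhat k = Matrix.of fun i j => x k i j - xbar k j)
    (hYhat : ∀ k, Yhat k = Matrix.of fun i j => y k i j - ybar k j)
    (k : ℕ) :
    fnorm (Xhat (k + 1)) ≤ (σ + α k) * fnorm (Xhat k) + α k * fnorm (Yhat k)
      + Real.sqrt N * (R + C) * α k := by
  have hα0 : 0 < α0 := hβ0.trans_le hβα
  have hXhat_eq : ∀ K, Xhat K = centering N * Matrix.of (x K) := fun K => by
    ext i j; simp [hXhat, hxbar, centering_mul_apply, Finset.sum_apply]
  have hYhat_eq : Yhat k = centering N * Matrix.of (y k) := by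
    ext i j; simp [hYhat, hybar, centering_mul_apply, Finset.sum_apply]
  have hxstep : Matrix.of (x (k + 1)) = W * Matrix.of (x k) - α k •
      (Matrix.of (x k) * A11ᵀ + Matrix.of (y k) * A12ᵀ - Matrix.of b1 + Matrix.of (ξ k)) := by
    funext i
    change x (k + 1) i = (W * Matrix.of (x k)) i
      - α k • ((Matrix.of (x k) * A11ᵀ) i + (Matrix.of (y k) * A12ᵀ) i - b1 i + ξ k i)
    simp only [hxrec, Matrix.mul_apply_eq_vecMul, Matrix.vecMul_transpose]
    rw [Matrix.vecMul_eq_sum]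
    rfl
  rw [hXhat_eq, hXhat_eq, hYhat_eq, hxstep]
  exact fnorm_centering_mul_step_le hN hWrow hWcol hσ0.le hWcontract hA11 hA12 hR hC
    (by rw [hα k]; positivity) _ _ _ _ hb1 (hξ k)

/-- Under the distributed two-time-scale setup, for every `k ≥ 0` the Frobenius
norms of the consensus-error matrices satisfy
`‖X̂_{k+1}‖ ≤ (σ + α_k)‖X̂_k‖ + α_k‖Ŷ_k‖ + √N(R+C)α_k`. -/
theorem stmt_6
    {N d : ℕ} (hN : 0 < N) (hd : 0 < d) (R C : ℝ) (hR : 0 ≤ R) (hC : 0 ≤ C)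
    (W V : Matrix (Fin N) (Fin N) ℝ)
    (hWnonneg : ∀ i j, 0 ≤ W i j) (hWrow : ∀ i, ∑ j, W i j = 1)
    (hWcol : ∀ j, ∑ i, W i j = 1)
    (hVnonneg : ∀ i j, 0 ≤ V i j) (hVrow : ∀ i, ∑ j, V i j = 1)
    (hVcol : ∀ j, ∑ i, V i j = 1)
    (σ : ℝ) (hσ0 : 0 < σ) (hσ1 : σ < 1)
    (hWcontract : ∀ v : Fin N → ℝ, (∑ i, v i = 0) → enormVec (W.mulVec v) ≤ σ * enormVec v)
    (hVcontract : ∀ v : Fin N → ℝ, (∑ i, v i = 0) → enormVec (V.mulVec v) ≤ σ * enormVec v)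
    (A11 A12 A21 A22 : Matrix (Fin d) (Fin d) ℝ)
    (hA11 : ∀ v, enormVec (A11.mulVec v) ≤ enormVec v)
    (hA12 : ∀ v, enormVec (A12.mulVec v) ≤ enormVec v)
    (hA21 : ∀ v, enormVec (A21.mulVec v) ≤ enormVec v)
    (hA22 : ∀ v, enormVec (A22.mulVec v) ≤ enormVec v)
    (b1 b2 : Fin N → Fin d → ℝ)
    (hb1 : ∀ i, enormVec (b1 i) ≤ R) (hb2 : ∀ i, enormVec (b2 i) ≤ R)
    (ξ ψ : ℕ → Fin N → Fin d → ℝ)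
    (hξ : ∀ k i, enormVec (ξ k i) ≤ C) (hψ : ∀ k i, enormVec (ψ k i) ≤ C)
    (α0 β0 : ℝ) (hβ0 : 0 < β0) (hβα : β0 ≤ α0)
    (α β : ℕ → ℝ)
    (hα : ∀ k, α k = α0 / ((k : ℝ) + 1) ^ ((2 : ℝ) / 3))
    (hβ : ∀ k, β k = β0 / ((k : ℝ) + 1))
    (x y : ℕ → Fin N → Fin d → ℝ)
    (hx0 : ∀ i, x 0 i = 0) (hy0 : ∀ i, y 0 i = 0)
    (hxrec : ∀ k i, x (k + 1) i =
      (∑ j, W i j • x k j) -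
        α k • (A11.mulVec (x k i) + A12.mulVec (y k i) - b1 i + ξ k i))
    (hyrec : ∀ k i, y (k + 1) i =
      (∑ j, V i j • y k j) -
        β k • (A21.mulVec (x k i) + A22.mulVec (y k i) - b2 i + ψ k i))
    (xbar ybar : ℕ → Fin d → ℝ)
    (hxbar : ∀ k, xbar k = (1 / (N : ℝ)) • ∑ i, x k i)
    (hybar : ∀ k, ybar k = (1 / (N : ℝ)) • ∑ i, y k i)
    (Xhat Yhat : ℕ → Matrix (Fin N) (Fin d) ℝ)
    (hXhat : ∀ k, Xhat k = Matrix.of fun i j => x k i j - xbar k j)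
    (hYhat : ∀ k, Yhat k = Matrix.of fun i j => y k i j - ybar k j)
    (k : ℕ) :
    fnorm (Xhat (k + 1)) ≤ (σ + α k) * fnorm (Xhat k) + α k * fnorm (Yhat k)
      + Real.sqrt N * (R + C) * α k :=
  stmt_6_general hN R C hR hC W hWrow hWcol σ hσ0 hWcontract A11 A12 hA11 hA12 b1 hb1 ξ hξ α0 β0 hβ0
    hβα α hα x y hxrec xbar ybar hxbar hybar Xhat Yhat hXhat hYhat k
end

section
/- Let σ ∈ (0,1) be real and let K ≤ k be nonnegative integers. Then ∑_{t=K}^{k} σ^{k−t}/(t+1) ≤ σ^{⌈k/2⌉}/(1−σ) + 2/((1−σ)·(k+1)). -/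
open Finset

section

variable {σ : ℝ}

lemma sum_Ico_pow_sub_le (hσ0 : 0 ≤ σ) (hσ1 : σ < 1) {a c k : ℕ} (hc : c ≤ k + 1) :
    ∑ t ∈ Ico a c, σ ^ (k - t) ≤ σ ^ (k + 1 - c) / (1 - σ) := by
  rw [sum_Ico_reflect (σ ^ ·) a hc]
  exact geom_sum_Ico_le_of_lt_one hσ0 hσ1

lemma sum_Ico_pow_sub_div_le (hσ0 : 0 ≤ σ) (hσ1 : σ < 1) {a c k : ℕ} (hc : c ≤ k + 1) :
    ∑ t ∈ Ico a c, σ ^ (k - t) / ((t : ℝ) + 1) ≤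
      σ ^ (k + 1 - c) / ((1 - σ) * ((a : ℝ) + 1)) := by
  have h1σ : 0 < 1 - σ := by linarith
  calc ∑ t ∈ Ico a c, σ ^ (k - t) / ((t : ℝ) + 1)
      ≤ ∑ t ∈ Ico a c, σ ^ (k - t) / ((a : ℝ) + 1) := by
        refine sum_le_sum fun t ht => ?_
        gcongr
        exact_mod_cast (mem_Ico.1 ht).1
    _ = (∑ t ∈ Ico a c, σ ^ (k - t)) / ((a : ℝ) + 1) := (sum_div _ _ _).symm
    _ ≤ σ ^ (k + 1 - c) / (1 - σ) / ((a : ℝ) + 1) := by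
        gcongr
        exact sum_Ico_pow_sub_le hσ0 hσ1 hc
    _ = σ ^ (k + 1 - c) / ((1 - σ) * ((a : ℝ) + 1)) := div_div _ _ _

end

theorem stmt_11_general (σ : ℝ) (hσ0 : 0 < σ) (hσ1 : σ < 1) (K k : ℕ) :
    (∑ t ∈ Finset.Icc K k, σ ^ (k - t) / ((t : ℝ) + 1)) ≤
      σ ^ (⌈(k : ℝ) / 2⌉₊) / (1 - σ) + 2 / ((1 - σ) * ((k : ℝ) + 1)) := by
  set n := ⌈(k : ℝ) / 2⌉₊
  have h1σ : 0 < 1 - σ := by linarith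
  have hn : (n : ℝ) < k / 2 + 1 := Nat.ceil_lt_add_one (by positivity)
  have hnk : n ≤ k + 1 := by exact_mod_cast (by linarith : (n : ℝ) ≤ k + 1)
  -- Split at `k + 1 - n`: the head carries the factor `σ ^ n`, the tail has `t + 1 ≥ (k + 1) / 2`.
  calc ∑ t ∈ Icc K k, σ ^ (k - t) / ((t : ℝ) + 1)
      ≤ ∑ t ∈ range (k + 1), σ ^ (k - t) / ((t : ℝ) + 1) :=
        sum_le_sum_of_subset_of_nonneg (fun t ht => by simp only [mem_Icc, mem_range] at ht ⊢; omega)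
          (fun t _ _ => by positivity)
    _ = ∑ t ∈ Ico 0 (k + 1 - n), σ ^ (k - t) / ((t : ℝ) + 1) +
          ∑ t ∈ Ico (k + 1 - n) (k + 1), σ ^ (k - t) / ((t : ℝ) + 1) := by
        rw [← range_eq_Ico, sum_range_add_sum_Ico _ (Nat.sub_le _ _)]
    _ ≤ σ ^ n / ((1 - σ) * ((0 : ℕ) + 1)) +
          σ ^ 0 / ((1 - σ) * (((k + 1 - n : ℕ) : ℝ) + 1)) := by
        gcongr
        · simpa only [Nat.sub_sub_self hnk] using
            sum_Ico_pow_sub_div_le hσ0.le hσ1 (a := 0) (Nat.sub_le (k + 1) n)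
        · simpa using sum_Ico_pow_sub_div_le hσ0.le hσ1 (a := k + 1 - n) le_rfl
    _ ≤ σ ^ n / (1 - σ) + 2 / ((1 - σ) * ((k : ℝ) + 1)) := by
        rw [Nat.cast_sub hnk, pow_zero]
        push_cast
        rw [zero_add, mul_one]
        gcongr _ + ?_
        rw [div_le_div_iff₀ (by nlinarith) (by positivity)]
        nlinarith

/-- For `σ ∈ (0,1)` and nonnegative integers `K ≤ k`,
`∑_{t=K}^{k} σ^(k−t)/(t+1) ≤ σ^⌈k/2⌉/(1−σ) + 2/((1−σ)·(k+1))`. -/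
theorem stmt_11 (σ : ℝ) (hσ0 : 0 < σ) (hσ1 : σ < 1) (K k : ℕ) (hKk : K ≤ k) :
    (∑ t ∈ Finset.Icc K k, σ ^ (k - t) / ((t : ℝ) + 1)) ≤
      σ ^ (⌈(k : ℝ) / 2⌉₊) / (1 - σ) + 2 / ((1 - σ) * ((k : ℝ) + 1)) :=
  stmt_11_general σ hσ0 hσ1 K k
end

section
/- Let σ ∈ (0,1) and c ≥ 0 be real, and let (V_k)_{k≥0} be a sequence of nonnegative reals with V_0 = 0 and V_{k+1} ≤ σ·V_k + c/(k+1) for all k ≥ 0. Then for every n ≥ 1, V_n ≤ c·(1 + ln n). -/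
/-! Since `σ V_k ≤ V_k`, the recursion gives `V_{k+1} ≤ V_k + c/(k+1)`; telescoping yields
`V_n ≤ c H_n`, and `H_n ≤ 1 + ln n`. -/

theorem le_mul_harmonic_of_le_add_div {c : ℝ} {V : ℕ → ℝ} (hV0 : V 0 = 0)
    (hstep : ∀ k, V (k + 1) ≤ V k + c / ((k : ℝ) + 1)) (n : ℕ) :
    V n ≤ c * harmonic n := by
  induction n with
  | zero => simp [hV0]
  | succ k ih =>
    calc V (k + 1) ≤ c * harmonic k + c / ((k : ℝ) + 1) := by linarith [hstep k]
      _ = c * harmonic (k + 1) := by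
        rw [harmonic_succ]
        push_cast
        ring

theorem stmt_12_general (σ c : ℝ) (hσ1 : σ < 1) (hc : 0 ≤ c) (V : ℕ → ℝ)
    (hVnonneg : ∀ k, 0 ≤ V k) (hV0 : V 0 = 0)
    (hrec : ∀ k, V (k + 1) ≤ σ * V k + c / ((k : ℝ) + 1))
    (n : ℕ) :
    V n ≤ c * (1 + Real.log n) := by
  have hstep (k : ℕ) : V (k + 1) ≤ V k + c / ((k : ℝ) + 1) :=
    (hrec k).trans (by gcongr; exact mul_le_of_le_one_left (hVnonneg k) hσ1.le)
  calc V n ≤ c * harmonic n := le_mul_harmonic_of_le_add_div hV0 hstep n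
    _ ≤ c * (1 + Real.log n) := by gcongr; exact harmonic_le_one_add_log n

/-- If `σ ∈ (0,1)`, `c ≥ 0`, and `(V_k)` is a nonnegative real sequence with
`V_0 = 0` and `V_{k+1} ≤ σ·V_k + c/(k+1)` for all `k ≥ 0`, then for every `n ≥ 1`,
`V_n ≤ c·(1 + ln n)`. -/
theorem stmt_12 (σ c : ℝ) (hσ0 : 0 < σ) (hσ1 : σ < 1) (hc : 0 ≤ c) (V : ℕ → ℝ)
    (hVnonneg : ∀ k, 0 ≤ V k) (hV0 : V 0 = 0)
    (hrec : ∀ k, V (k + 1) ≤ σ * V k + c / ((k : ℝ) + 1))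
    (n : ℕ) (hn : 1 ≤ n) :
    V n ≤ c * (1 + Real.log n) :=
  stmt_12_general σ c hσ1 hc V hVnonneg hV0 hrec n
end

section
/- Let σ ∈ (0,1) and c ≥ 0 be real, let K ≥ 1 be an integer, and let (V_k)_{k≥0} be a sequence of nonnegative reals with V_0 = 0 and V_{k+1} ≤ σ·V_k + c/(k+1) for all k ≥ 0. Then for every k ≥ K, V_{k+1} ≤ 2c·(1 + ln K)·σ^{−K}·σ^{⌈k/2⌉}/(1−σ) + 2c/((1−σ)·(k+1)). -/
/-!
Unrolling the recursion gives `V_{k+1} ≤ ∑_{i ≤ k} σ^i c/(k - i + 1)`. Cut the lags at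
`k + 1 - m` with `m = ⌈k/2⌉`: the short lags see denominators `k - i + 1 ≥ (k + 1)/2`, so they
contribute at most `2c/((1-σ)(k+1))`, while the long lags `i ≥ k + 1 - m ≥ m` contribute at most
`c σ^m/(1-σ)`. This is already stronger than the claim, because `(1 + ln K) σ^{-K} ≥ 1`.
-/

open Finset

theorem le_sum_pow_mul_of_le_mul_add {R : Type*} [CommSemiring R] [PartialOrder R]
    [IsOrderedRing R] {σ : R} (hσ : 0 ≤ σ) {V a : ℕ → R} (hV0 : V 0 = 0)
    (hrec : ∀ n, V (n + 1) ≤ σ * V n + a n) (n : ℕ) :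
    V n ≤ ∑ i ∈ range n, σ ^ i * a (n - 1 - i) := by
  induction n with
  | zero => simp [hV0]
  | succ n ih =>
    calc V (n + 1) ≤ σ * V n + a n := hrec n
      _ ≤ σ * ∑ i ∈ range n, σ ^ i * a (n - 1 - i) + a n := by gcongr
      _ = ∑ i ∈ range (n + 1), σ ^ i * a (n + 1 - 1 - i) := by
        rw [sum_range_succ', mul_sum]
        congr 1
        · refine sum_congr rfl fun i _ => ?_
          rw [pow_succ', mul_assoc, show n + 1 - 1 - (i + 1) = n - 1 - i by omega]
        · simp

theorem natCeil_half_bounds (k : ℕ) : k ≤ 2 * ⌈(k : ℝ) / 2⌉₊ ∧ 2 * ⌈(k : ℝ) / 2⌉₊ ≤ k + 1 := by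
  have hle := Nat.le_ceil ((k : ℝ) / 2)
  have hlt := Nat.ceil_lt_add_one (by positivity : (0 : ℝ) ≤ (k : ℝ) / 2)
  constructor
  · exact_mod_cast (by linarith : (k : ℝ) ≤ 2 * ⌈(k : ℝ) / 2⌉₊)
  · exact Nat.lt_succ_iff.mp (by exact_mod_cast (by linarith : (2 * ⌈(k : ℝ) / 2⌉₊ : ℝ) < k + 2))

theorem sum_short_lags_le {σ c : ℝ} (hσ0 : 0 ≤ σ) (hσ1 : σ < 1) (hc : 0 ≤ c) {k m : ℕ}
    (hkm : k ≤ 2 * m) :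
    ∑ i ∈ range (k + 1 - m), σ ^ i * (c / (((k - i : ℕ) : ℝ) + 1))
      ≤ 2 * c / ((1 - σ) * ((k : ℝ) + 1)) := by
  have hterm : ∀ i ∈ range (k + 1 - m),
      σ ^ i * (c / (((k - i : ℕ) : ℝ) + 1)) ≤ 2 * c / ((k : ℝ) + 1) * σ ^ i := by
    intro i hi
    have hki : (k : ℝ) ≤ 2 * ((k - i : ℕ) : ℝ) := by
      have := mem_range.mp hi
      exact_mod_cast (by omega : k ≤ 2 * (k - i))
    have hdiv : c / (((k - i : ℕ) : ℝ) + 1) ≤ 2 * c / ((k : ℝ) + 1) := by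
      rw [div_le_div_iff₀ (by positivity) (by positivity)]
      nlinarith
    rw [mul_comm]
    exact mul_le_mul_of_nonneg_right hdiv (by positivity)
  calc _ ≤ ∑ i ∈ range (k + 1 - m), 2 * c / ((k : ℝ) + 1) * σ ^ i := sum_le_sum hterm
    _ = 2 * c / ((k : ℝ) + 1) * ∑ i ∈ range (k + 1 - m), σ ^ i := by rw [mul_sum]
    _ ≤ 2 * c / ((k : ℝ) + 1) * (1 / (1 - σ)) := by
      have hgeom := geom_sum_Ico_le_of_lt_one (m := 0) (n := k + 1 - m) hσ0 hσ1
      rw [← range_eq_Ico, pow_zero] at hgeom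
      exact mul_le_mul_of_nonneg_left hgeom (by positivity)
    _ = 2 * c / ((1 - σ) * ((k : ℝ) + 1)) := by
      rw [div_mul_div_comm, mul_one, mul_comm ((k : ℝ) + 1)]

theorem sum_long_lags_le {σ c : ℝ} (hσ0 : 0 ≤ σ) (hσ1 : σ < 1) (hc : 0 ≤ c) {k m : ℕ}
    (hmk : 2 * m ≤ k + 1) :
    ∑ i ∈ Ico (k + 1 - m) (k + 1), σ ^ i * (c / (((k - i : ℕ) : ℝ) + 1))
      ≤ c * σ ^ m / (1 - σ) := by
  have hterm : ∀ i ∈ Ico (k + 1 - m) (k + 1),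
      σ ^ i * (c / (((k - i : ℕ) : ℝ) + 1)) ≤ c * σ ^ i := by
    intro i _
    rw [mul_comm]
    exact mul_le_mul_of_nonneg_right (div_le_self hc (by simp)) (by positivity)
  calc _ ≤ ∑ i ∈ Ico (k + 1 - m) (k + 1), c * σ ^ i := sum_le_sum hterm
    _ = c * ∑ i ∈ Ico (k + 1 - m) (k + 1), σ ^ i := by rw [mul_sum]
    _ ≤ c * (σ ^ (k + 1 - m) / (1 - σ)) :=
      mul_le_mul_of_nonneg_left (geom_sum_Ico_le_of_lt_one hσ0 hσ1) hc
    _ ≤ c * (σ ^ m / (1 - σ)) := by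
      have hpow : σ ^ (k + 1 - m) ≤ σ ^ m := pow_le_pow_of_le_one hσ0 hσ1.le (by omega)
      exact mul_le_mul_of_nonneg_left (div_le_div_of_nonneg_right hpow (by linarith)) hc
    _ = c * σ ^ m / (1 - σ) := by rw [mul_div_assoc]

theorem stmt_13_general (σ c : ℝ) (hσ0 : 0 < σ) (hσ1 : σ < 1) (hc : 0 ≤ c) (K : ℕ)
    (V : ℕ → ℝ) (hV0 : V 0 = 0)
    (hrec : ∀ k, V (k + 1) ≤ σ * V k + c / ((k : ℝ) + 1))
    (k : ℕ) :
    V (k + 1) ≤ 2 * c * (1 + Real.log K) * (σ ^ K)⁻¹ * σ ^ (⌈(k : ℝ) / 2⌉₊) / (1 - σ)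
      + 2 * c / ((1 - σ) * ((k : ℝ) + 1)) := by
  set m := ⌈(k : ℝ) / 2⌉₊
  obtain ⟨hkm, hmk⟩ := natCeil_half_bounds k
  have hunrolled := le_sum_pow_mul_of_le_mul_add hσ0.le hV0 hrec (k + 1)
  rw [Nat.add_sub_cancel, ← sum_range_add_sum_Ico _ (by omega : k + 1 - m ≤ k + 1)] at hunrolled
  have hshort := sum_short_lags_le hσ0.le hσ1 hc hkm
  have hlong := sum_long_lags_le hσ0.le hσ1 hc hmk
  have hfactor : 1 ≤ 2 * (1 + Real.log K) * (σ ^ K)⁻¹ := by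
    have hinv : 1 ≤ (σ ^ K)⁻¹ := one_le_inv₀ (by positivity) |>.mpr (pow_le_one₀ hσ0.le hσ1.le)
    nlinarith [Real.log_natCast_nonneg K]
  have hlong' : c * σ ^ m / (1 - σ)
      ≤ 2 * c * (1 + Real.log K) * (σ ^ K)⁻¹ * σ ^ m / (1 - σ) := by
    have h1σ : 0 < 1 - σ := by linarith
    rw [div_le_div_iff_of_pos_right h1σ]
    nlinarith [mul_le_mul_of_nonneg_left hfactor (by positivity : 0 ≤ c * σ ^ m)]
  linarith

/-- If `σ ∈ (0,1)`, `c ≥ 0`, `K ≥ 1` is an integer, and `(V_k)` is a nonnegative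
real sequence with `V_0 = 0` and `V_{k+1} ≤ σ·V_k + c/(k+1)` for all `k ≥ 0`, then for every
`k ≥ K`, `V_{k+1} ≤ 2c·(1 + ln K)·σ^(−K)·σ^⌈k/2⌉/(1−σ) + 2c/((1−σ)·(k+1))`. -/
theorem stmt_13 (σ c : ℝ) (hσ0 : 0 < σ) (hσ1 : σ < 1) (hc : 0 ≤ c) (K : ℕ) (hK : 1 ≤ K)
    (V : ℕ → ℝ) (hVnonneg : ∀ k, 0 ≤ V k) (hV0 : V 0 = 0)
    (hrec : ∀ k, V (k + 1) ≤ σ * V k + c / ((k : ℝ) + 1))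
    (k : ℕ) (hk : K ≤ k) :
    V (k + 1) ≤ 2 * c * (1 + Real.log K) * (σ ^ K)⁻¹ * σ ^ (⌈(k : ℝ) / 2⌉₊) / (1 - σ)
      + 2 * c / ((1 - σ) * ((k : ℝ) + 1)) :=
  stmt_13_general σ c hσ0 hσ1 hc K V hV0 hrec k
end
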